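/- arXiv:1605.09292 — 3 statements merged into one kernel-verified Lean document; each statement's English description precedes it below -/
import Mathlib

section
/- Let q be an odd prime and let (M, N) be a coprime symmetric pair of n×n integer matrices (i.e., MᵗN = NᵗM and the n×2n matrix (M N) has rank n mod every prime) such that (X_s M X_s⁻¹, X_s N X_s) is also an integral coprime symmetric pair, where X_s = diag(qI_s, I_{n−s}). Then the generalized Gauss sum satisfies 𝒢_{X_s M X_s⁻¹}(X_s N X_s) = q^s · 𝒢_M(N), where 𝒢_C(D) = Σ_{U ∈ ℤ^{1,n}/ℤ^{1,n}D} exp(πi · Tr(2 ᵗU U D⁻¹ C)). -/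
open Matrix Finset

/-- The summand of the generalized Gauss sum `𝒢_C(D)`:
`e{2 ᵗU U D⁻¹ C} = exp(π i Tr(2 ᵗU U D⁻¹ C))` for a row vector `U`. -/
noncomputable def gaussTerm {n : ℕ} (C D : Matrix (Fin n) (Fin n) ℤ) (U : Fin n → ℤ) : ℂ :=
  Complex.exp (Real.pi * Complex.I *
    (2 * (vecMulVec (fun i => (U i : ℂ)) (fun i => (U i : ℂ)) *
      ((D.map (Int.cast : ℤ → ℂ))⁻¹ * C.map (Int.cast : ℤ → ℂ)))).trace)

/-- `R` is a complete set of representatives for `ℤ^{1,n}/ℤ^{1,n}D`. -/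
def IsRepSet {n : ℕ} (D : Matrix (Fin n) (Fin n) ℤ) (R : Finset (Fin n → ℤ)) : Prop :=
  ∀ v : Fin n → ℤ, ∃! u, u ∈ R ∧ ∃ w : Fin n → ℤ, v = u + w ᵥ* D

/-- `(C D)` is a coprime symmetric pair: `C ᵗD = D ᵗC` and `(C D)` has rank `n` mod
every prime. -/
def IsCoprimeSymmetricPair {n : ℕ} (C D : Matrix (Fin n) (Fin n) ℤ) : Prop :=
  C * Dᵀ = D * Cᵀ ∧
  ∀ p : ℕ, p.Prime →
    (Matrix.fromCols (C.map (Int.cast : ℤ → ZMod p))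
      (D.map (Int.cast : ℤ → ZMod p))).rank = n

/-- `X_s = diag(q I_s, I_{n-s})`. -/
def Xs (q s n : ℕ) : Matrix (Fin n) (Fin n) ℤ :=
  Matrix.diagonal fun i => if (i : ℕ) < s then (q : ℤ) else 1

/-!
Write `X = X_s = diag(d)`. Every class of `ℤⁿ` modulo the rows of `X N X` has exactly one
representative `U = t + (r + c N) X` with `t`, `c` in the box `∏ [0, dᵢ)` and `r ∈ R`. As
`B = N⁻¹ M` is symmetric and `M' X = X M`, the phase of `U` for `(M', X N X)` is the phase of
`U X⁻¹ = t X⁻¹ + r + c N` for `(M, N)`, which modulo integers is the phase of `t X⁻¹ + r` plus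
`2 (c X⁻¹)·(M' t)`. Summing over `c` gives the factor `∏_{i < s} q [q ∣ 2 (M' t)ᵢ]`. Modulo `q`
the first `s` rows of `X N X` and the top-right block of `M'` vanish, so coprimality of
`(M', X N X)` makes the top-left block of `M'` invertible mod `q`; as `q` is odd, the factor
vanishes unless `t = 0`, and the `t = 0` term is `q^s 𝒢_M(N)`.
-/

noncomputable def expTwoPiI (z : ℂ) : ℂ := Complex.exp (2 * Real.pi * Complex.I * z)

theorem expTwoPiI_add (z w : ℂ) : expTwoPiI (z + w) = expTwoPiI z * expTwoPiI w := by
  rw [expTwoPiI, mul_add, Complex.exp_add]; rfl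

theorem expTwoPiI_eq_one_iff {z : ℂ} : expTwoPiI z = 1 ↔ ∃ k : ℤ, z = k := by
  have h : 2 * (Real.pi : ℂ) * Complex.I ≠ 0 := by simp [Real.pi_ne_zero]
  rw [expTwoPiI, Complex.exp_eq_one_iff]
  refine exists_congr fun k => ⟨fun hk => ?_, fun hk => by rw [hk, mul_comm]⟩
  exact mul_left_cancel₀ h (hk.trans (mul_comm _ _))

theorem expTwoPiI_intCast (k : ℤ) : expTwoPiI k = 1 := expTwoPiI_eq_one_iff.mpr ⟨k, rfl⟩

theorem expTwoPiI_add_intCast (z : ℂ) (k : ℤ) : expTwoPiI (z + k) = expTwoPiI z := by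
  rw [expTwoPiI_add, expTwoPiI_intCast, mul_one]

theorem expTwoPiI_natCast_mul (k : ℕ) (z : ℂ) : expTwoPiI (k * z) = expTwoPiI z ^ k := by
  rw [expTwoPiI, expTwoPiI, ← Complex.exp_nat_mul]; ring_nf

theorem expTwoPiI_sum {ι : Type*} (s : Finset ι) (f : ι → ℂ) :
    expTwoPiI (∑ i ∈ s, f i) = ∏ i ∈ s, expTwoPiI (f i) := by
  simp only [expTwoPiI, Finset.mul_sum, Complex.exp_sum]

theorem sum_Ico_expTwoPiI_mul_div {m : ℤ} (hm : 0 < m) (b : ℤ) :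
    ∑ x ∈ Ico 0 m, expTwoPiI (x * b / m) = if m ∣ b then (m : ℂ) else 0 := by
  lift m to ℕ using hm.le
  simp only [Int.cast_natCast]
  have hm0 : (m : ℂ) ≠ 0 := by exact_mod_cast hm.ne'
  have hsum : ∑ x ∈ Ico 0 (m : ℤ), expTwoPiI (x * b / m)
      = ∑ x ∈ range m, expTwoPiI (b / m) ^ x := by
    rw [Int.Ico_eq_finset_map, sub_zero, Int.toNat_natCast, Finset.sum_map]
    refine Finset.sum_congr rfl fun x _ => ?_
    rw [← expTwoPiI_natCast_mul]
    simp [mul_div_assoc]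
  rw [hsum]
  split_ifs with hdvd
  · obtain ⟨k, rfl⟩ := hdvd
    have hk : ((m * k : ℤ) : ℂ) / m = k := by push_cast; field_simp
    rw [hk, expTwoPiI_intCast]
    simp
  · have hne : expTwoPiI (b / m) ≠ 1 := by
      rw [Ne, expTwoPiI_eq_one_iff]
      rintro ⟨k, hk⟩
      refine hdvd ⟨k, ?_⟩
      rw [div_eq_iff hm0] at hk
      exact_mod_cast hk.trans (mul_comm _ _)
    have hpow : expTwoPiI (b / m) ^ m = 1 := by
      rw [← expTwoPiI_natCast_mul, mul_div_cancel₀ _ hm0, expTwoPiI_intCast]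
    rw [geom_sum_eq hne, hpow, sub_self, zero_div]

theorem sum_piFinset_expTwoPiI {ι : Type*} [Fintype ι] [DecidableEq ι] {d : ι → ℤ}
    (hd : ∀ i, 0 < d i) (y : ι → ℤ) :
    ∑ c ∈ Fintype.piFinset (fun i => Ico 0 (d i)), expTwoPiI (∑ i, c i * y i / d i)
      = ∏ i, if d i ∣ y i then (d i : ℂ) else 0 := by
  simp only [expTwoPiI_sum, ← sum_Ico_expTwoPiI_mul_div (hd _), Finset.prod_univ_sum]

theorem det_diagonal_ne_zero {ι R : Type*} [Fintype ι] [DecidableEq ι] [CommRing R]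
    [NoZeroDivisors R] [Nontrivial R] {d : ι → R} (hd : ∀ i, d i ≠ 0) : (diagonal d).det ≠ 0 := by
  rw [det_diagonal, prod_ne_zero_iff]
  exact fun i _ => hd i

section IntCast

variable {ι R : Type*} [Fintype ι] [CommRing R]

theorem intCast_comp_vecMul (v : ι → ℤ) (A : Matrix ι ι ℤ) :
    (Int.cast ∘ (v ᵥ* A) : ι → R) = (Int.cast ∘ v) ᵥ* A.map Int.cast :=
  funext fun i => by simpa using RingHom.map_vecMul (Int.castRingHom R) A v i

theorem intCast_comp_mulVec (A : Matrix ι ι ℤ) (v : ι → ℤ) :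
    (Int.cast ∘ (A *ᵥ v) : ι → R) = A.map Int.cast *ᵥ (Int.cast ∘ v) :=
  funext fun i => by simpa using RingHom.map_mulVec (Int.castRingHom R) A v i

theorem intCast_dotProduct (v w : ι → ℤ) :
    ((v ⬝ᵥ w : ℤ) : R) = (Int.cast ∘ v) ⬝ᵥ (Int.cast ∘ w) := by
  simpa using RingHom.map_dotProduct (Int.castRingHom R) v w

theorem map_intCast_mul (A B : Matrix ι ι ℤ) :
    (A * B).map (Int.cast : ℤ → R) = A.map Int.cast * B.map Int.cast :=
  Matrix.map_mul (f := Int.castRingHom R)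

theorem isUnit_det_map_intCast [DecidableEq ι] {K : Type*} [Field K] [CharZero K]
    {A : Matrix ι ι ℤ} (hA : A.det ≠ 0) : IsUnit (A.map (Int.cast : ℤ → K)).det := by
  rw [isUnit_iff_ne_zero, ← Int.cast_det]
  exact_mod_cast hA

theorem mul_eq_mul_of_map_intCast_eq_conj [DecidableEq ι] {X M M' : Matrix ι ι ℤ}
    (hX : X.det ≠ 0)
    (h : M'.map (Int.cast : ℤ → ℚ) = X.map Int.cast * M.map Int.cast * (X.map Int.cast)⁻¹) :
    M' * X = X * M := by
  apply Matrix.map_injective (f := (Int.cast : ℤ → ℚ)) Int.cast_injective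
  beta_reduce
  rw [map_intCast_mul, map_intCast_mul, h,
    nonsing_inv_mul_cancel_right _ _ (isUnit_det_map_intCast hX)]

end IntCast

section QuadraticForm

variable {ι K : Type*} [Fintype ι] [CommRing K]

theorem vecMul_dotProduct_comm_of_transpose_eq {B : Matrix ι ι K} (hB : Bᵀ = B) (x y : ι → K) :
    x ᵥ* B ⬝ᵥ y = y ᵥ* B ⬝ᵥ x := by
  rw [dotProduct_comm, ← mulVec_transpose, hB, dotProduct_mulVec]

theorem transpose_nonsing_inv_mul [DecidableEq ι] {M N : Matrix ι ι K} (hN : IsUnit N.det)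
    (hsym : M * Nᵀ = N * Mᵀ) : (N⁻¹ * M)ᵀ = N⁻¹ * M := by
  have hNt : IsUnit Nᵀ.det := by rwa [det_transpose]
  rw [transpose_mul, transpose_nonsing_inv]
  calc Mᵀ * Nᵀ⁻¹ = N⁻¹ * (N * Mᵀ) * Nᵀ⁻¹ := by rw [nonsing_inv_mul_cancel_left _ _ hN]
    _ = N⁻¹ * M := by rw [← hsym, ← Matrix.mul_assoc, mul_nonsing_inv_cancel_right _ _ hNt]

theorem quadForm_add_vecMul {B N M : Matrix ι ι K} (hB : Bᵀ = B) (hNB : N * B = M)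
    (v c : ι → K) :
    (v + c ᵥ* N) ᵥ* B ⬝ᵥ (v + c ᵥ* N)
      = v ᵥ* B ⬝ᵥ v + 2 * (c ᵥ* M ⬝ᵥ v) + c ᵥ* M ⬝ᵥ c ᵥ* N := by
  have hcN : c ᵥ* N ᵥ* B = c ᵥ* M := by rw [vecMul_vecMul, hNB]
  simp only [add_vecMul, add_dotProduct, dotProduct_add, hcN]
  rw [vecMul_dotProduct_comm_of_transpose_eq hB v (c ᵥ* N), hcN]
  ring

theorem quadForm_conj [DecidableEq ι] {X N M M' : Matrix ι ι K} (hX : IsUnit X.det)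
    (hXt : Xᵀ = X) (hM' : M' * X = X * M) (w : ι → K) :
    (w ᵥ* X) ᵥ* ((X * N * X)⁻¹ * M') ⬝ᵥ (w ᵥ* X) = w ᵥ* (N⁻¹ * M) ⬝ᵥ w := by
  have hmat : X * ((X * N * X)⁻¹ * M') * Xᵀ = N⁻¹ * M := by
    rw [hXt, Matrix.mul_assoc, Matrix.mul_assoc, hM', Matrix.mul_inv_rev, Matrix.mul_inv_rev]
    simp only [Matrix.mul_assoc, mul_nonsing_inv_cancel_left _ _ hX,
      nonsing_inv_mul_cancel_left _ _ hX]
  rw [← hmat, ← vecMul_vecMul, ← vecMul_vecMul, vecMul_transpose, dotProduct_comm (X *ᵥ _),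
    dotProduct_mulVec, dotProduct_comm]
  simp only [vecMul_vecMul, Matrix.mul_assoc]

theorem mul_transpose_eq_of_conj {X N M M' : Matrix ι ι K} (hXt : Xᵀ = X)
    (hsym : M * Nᵀ = N * Mᵀ) (hM' : M' * X = X * M) :
    M' * (X * N * X)ᵀ = X * N * X * M'ᵀ := by
  have hM't : X * M'ᵀ = Mᵀ * X := by
    rw [← transpose_transpose (X * M'ᵀ), transpose_mul, transpose_transpose, hXt, hM',
      transpose_mul, hXt]
  calc M' * (X * N * X)ᵀ = M' * X * Nᵀ * X := by
        simp only [transpose_mul, hXt, Matrix.mul_assoc]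
    _ = X * N * (Mᵀ * X) := by rw [hM', Matrix.mul_assoc X M, hsym]; simp only [Matrix.mul_assoc]
    _ = X * N * X * M'ᵀ := by rw [← hM't]; simp only [Matrix.mul_assoc]

end QuadraticForm

section GaussTerm

variable {n : ℕ}

noncomputable def gaussPhase (C D : Matrix (Fin n) (Fin n) ℤ) (v : Fin n → ℂ) : ℂ :=
  v ᵥ* ((D.map (Int.cast : ℤ → ℂ))⁻¹ * C.map (Int.cast : ℤ → ℂ)) ⬝ᵥ v

theorem gaussTerm_eq (C D : Matrix (Fin n) (Fin n) ℤ) (U : Fin n → ℤ) :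
    gaussTerm C D U = expTwoPiI (gaussPhase C D (Int.cast ∘ U)) := by
  rw [gaussTerm, expTwoPiI, gaussPhase, two_mul, trace_add, vecMulVec_mul, trace_vecMulVec,
    dotProduct_comm]
  congr 1
  simp only [Function.comp_def]
  ring

variable {C D : Matrix (Fin n) (Fin n) ℤ}

theorem gaussPhase_add_vecMul (hD : D.det ≠ 0) (hsym : C * Dᵀ = D * Cᵀ) (v : Fin n → ℂ)
    (w : Fin n → ℤ) :
    gaussPhase C D (v + Int.cast ∘ (w ᵥ* D))
      = gaussPhase C D v + 2 * ((Int.cast ∘ (w ᵥ* C)) ⬝ᵥ v) + ((w ᵥ* C ⬝ᵥ w ᵥ* D : ℤ) : ℂ) := by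
  have hD' := isUnit_det_map_intCast (K := ℂ) hD
  have hsym' : C.map (Int.cast : ℤ → ℂ) * (D.map Int.cast)ᵀ
      = D.map Int.cast * (C.map Int.cast)ᵀ := by
    rw [← transpose_map, ← transpose_map, ← map_intCast_mul, ← map_intCast_mul, hsym]
  rw [gaussPhase, gaussPhase, intCast_comp_vecMul, intCast_comp_vecMul, intCast_dotProduct,
    intCast_comp_vecMul, intCast_comp_vecMul]
  exact quadForm_add_vecMul (transpose_nonsing_inv_mul hD' hsym')
    (mul_nonsing_inv_cancel_left _ _ hD') _ _

theorem gaussTerm_add_vecMul (hD : D.det ≠ 0) (hsym : C * Dᵀ = D * Cᵀ) (u w : Fin n → ℤ) :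
    gaussTerm C D (u + w ᵥ* D) = gaussTerm C D u := by
  have hcast : (Int.cast ∘ (u + w ᵥ* D) : Fin n → ℂ) = Int.cast ∘ u + Int.cast ∘ (w ᵥ* D) :=
    funext fun i => Int.cast_add _ _
  rw [gaussTerm_eq, gaussTerm_eq, hcast, gaussPhase_add_vecMul hD hsym, ← intCast_dotProduct,
    add_assoc, ← Int.cast_two, ← Int.cast_mul, ← Int.cast_add, expTwoPiI_add_intCast]

end GaussTerm

section IsRepSet

variable {n : ℕ}

theorem exists_eq_add_vecMul_comm {D : Matrix (Fin n) (Fin n) ℤ} {u v : Fin n → ℤ}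
    (h : ∃ w : Fin n → ℤ, v = u + w ᵥ* D) : ∃ w : Fin n → ℤ, u = v + w ᵥ* D := by
  obtain ⟨w, rfl⟩ := h
  exact ⟨-w, by rw [neg_vecMul, add_neg_cancel_right]⟩

theorem vecMul_injective_of_det_ne_zero {D : Matrix (Fin n) (Fin n) ℤ} (hD : D.det ≠ 0) :
    Function.Injective (· ᵥ* D) := fun a b h =>
  sub_eq_zero.mp (eq_zero_of_vecMul_eq_zero hD (by rw [sub_vecMul]; exact sub_eq_zero.mpr h))

theorem IsRepSet.sum_eq {D : Matrix (Fin n) (Fin n) ℤ} {R R' : Finset (Fin n → ℤ)}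
    (hR : IsRepSet D R) (hR' : IsRepSet D R') {f : (Fin n → ℤ) → ℂ}
    (hf : ∀ u w, f (u + w ᵥ* D) = f u) :
    ∑ u ∈ R, f u = ∑ u ∈ R', f u := by
  choose g hgR hg using fun u => (hR' u).exists
  choose g' hg'R hg' using fun u => (hR u).exists
  refine Finset.sum_nbij' g g' (fun u _ => hgR u) (fun u _ => hg'R u) ?_ ?_ ?_
  · exact fun u hu => (hR (g u)).unique ⟨hg'R _, hg' _⟩ ⟨hu, exists_eq_add_vecMul_comm (hg u)⟩
  · exact fun u hu => (hR' (g' u)).unique ⟨hgR _, hg _⟩ ⟨hu, exists_eq_add_vecMul_comm (hg' u)⟩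
  · intro u _
    obtain ⟨w, hw⟩ := hg u
    conv_lhs => rw [hw]
    exact hf _ _

variable {A B : Matrix (Fin n) (Fin n) ℤ} {S T : Finset (Fin n → ℤ)}

theorem IsRepSet.injOn_add_vecMul (hB : IsRepSet B T) (hBdet : B.det ≠ 0) :
    Set.InjOn (fun p : (Fin n → ℤ) × (Fin n → ℤ) => p.2 + p.1 ᵥ* B) ↑(S ×ˢ T) := by
  rintro ⟨a, b⟩ hab ⟨a', b'⟩ hab' h
  simp only [coe_product, Set.mem_prod, mem_coe] at hab hab' h
  have hb : b = b' := (hB (b + a ᵥ* B)).unique ⟨hab.2, a, rfl⟩ ⟨hab'.2, a', h⟩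
  subst hb
  rw [vecMul_injective_of_det_ne_zero hBdet (add_left_cancel h)]

theorem IsRepSet.image_add_vecMul (hA : IsRepSet A S) (hB : IsRepSet B T) (hBdet : B.det ≠ 0) :
    IsRepSet (A * B) ((S ×ˢ T).image fun p => p.2 + p.1 ᵥ* B) := by
  intro v
  obtain ⟨b, ⟨hbT, w, hw⟩, hb_uniq⟩ := hB v
  obtain ⟨a, ⟨haS, w', hw'⟩, ha_uniq⟩ := hA w
  refine ⟨b + a ᵥ* B, ⟨mem_image.mpr ⟨(a, b), mem_product.mpr ⟨haS, hbT⟩, rfl⟩, w', ?_⟩, ?_⟩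
  · rw [hw, hw', add_vecMul, vecMul_vecMul, add_assoc]
  · rintro _ ⟨hu, w'', hw''⟩
    obtain ⟨⟨a', b'⟩, hab', rfl⟩ := mem_image.mp hu
    rw [mem_product] at hab'
    have hv : v = b' + (a' + w'' ᵥ* A) ᵥ* B := by
      rw [hw'', add_vecMul, vecMul_vecMul, add_assoc]
    obtain rfl : b' = b := hb_uniq b' ⟨hab'.2, _, hv⟩
    have hw_eq : w = a' + w'' ᵥ* A :=
      vecMul_injective_of_det_ne_zero hBdet (add_left_cancel (hw.symm.trans hv))
    obtain rfl : a' = a := ha_uniq a' ⟨hab'.1, w'', hw_eq⟩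
    rfl

theorem IsRepSet.sum_mul {R : Finset (Fin n → ℤ)} (hA : IsRepSet A S) (hB : IsRepSet B T)
    (hBdet : B.det ≠ 0) (hR : IsRepSet (A * B) R) {f : (Fin n → ℤ) → ℂ}
    (hf : ∀ u w, f (u + w ᵥ* (A * B)) = f u) :
    ∑ u ∈ R, f u = ∑ a ∈ S, ∑ b ∈ T, f (b + a ᵥ* B) := by
  rw [hR.sum_eq (hA.image_add_vecMul hB hBdet) hf, sum_image (hB.injOn_add_vecMul hBdet),
    sum_product]

theorem isRepSet_diagonal {d : Fin n → ℤ} (hd : ∀ i, 0 < d i) :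
    IsRepSet (diagonal d) (Fintype.piFinset fun i => Ico 0 (d i)) := by
  intro v
  refine ⟨fun i => v i % d i, ⟨?_, fun i => v i / d i, ?_⟩, ?_⟩
  · simp only [Fintype.mem_piFinset, mem_Ico]
    exact fun i => ⟨Int.emod_nonneg _ (hd i).ne', Int.emod_lt_of_pos _ (hd i)⟩
  · ext i
    simp [vecMul_diagonal, Int.emod_add_ediv_mul]
  · rintro u ⟨hu, w, rfl⟩
    simp only [Fintype.mem_piFinset, mem_Ico] at hu
    ext i
    simp [vecMul_diagonal, Int.emod_eq_of_lt (hu i).1 (hu i).2]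

end IsRepSet

section DiagonalConj

variable {n : ℕ} {d : Fin n → ℤ} {M N M' : Matrix (Fin n) (Fin n) ℤ}

theorem intCast_vecMul_dotProduct_div (hd : ∀ i, d i ≠ 0)
    (hM' : M' * diagonal d = diagonal d * M) (c t : Fin n → ℤ) :
    (Int.cast ∘ (c ᵥ* M)) ⬝ᵥ (fun i => (t i : ℂ) / d i) = ∑ i, (c i : ℂ) * (M' *ᵥ t) i / d i := by
  have hentry : ∀ i j, (M i j : ℂ) / d j = M' i j / d i := fun i j => by
    have h := congrFun (congrFun hM' i) j
    simp only [mul_diagonal, diagonal_mul] at h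
    rw [div_eq_div_iff (by exact_mod_cast hd j) (by exact_mod_cast hd i)]
    have h' : M i j * d i = M' i j * d j := by linarith
    exact_mod_cast h'
  simp only [dotProduct, vecMul, mulVec, Function.comp_apply, Int.cast_sum, Int.cast_mul,
    sum_mul, mul_sum, sum_div]
  rw [sum_comm]
  refine sum_congr rfl fun i _ => sum_congr rfl fun j _ => ?_
  calc (c i : ℂ) * M i j * (t j / d j) = c i * t j * (M i j / d j) := by ring
    _ = c i * (M' i j * t j) / d i := by rw [hentry]; ring

theorem gaussTerm_diagonal_conj (hd : ∀ i, d i ≠ 0) (hN : N.det ≠ 0) (hsym : M * Nᵀ = N * Mᵀ)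
    (hM' : M' * diagonal d = diagonal d * M) (t r c : Fin n → ℤ) :
    gaussTerm M' (diagonal d * N * diagonal d) (t + (r + c ᵥ* N) ᵥ* diagonal d)
      = expTwoPiI (gaussPhase M N ((fun i => (t i : ℂ) / d i) + Int.cast ∘ r))
        * expTwoPiI (∑ i, c i * ((2 * (M' *ᵥ t) i : ℤ) : ℂ) / d i) := by
  have hXc : (diagonal d).map (Int.cast : ℤ → ℂ) = diagonal fun i => (d i : ℂ) :=
    diagonal_map Int.cast_zero
  have hX := isUnit_det_map_intCast (K := ℂ) (det_diagonal_ne_zero hd)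
  have hM'c : M'.map (Int.cast : ℤ → ℂ) * (diagonal d).map Int.cast
      = (diagonal d).map Int.cast * M.map Int.cast := by
    rw [← map_intCast_mul, ← map_intCast_mul, hM']
  have hU : (Int.cast ∘ (t + (r + c ᵥ* N) ᵥ* diagonal d) : Fin n → ℂ)
      = ((fun i => (t i : ℂ) / d i) + Int.cast ∘ r + Int.cast ∘ (c ᵥ* N))
        ᵥ* (diagonal d).map Int.cast := by
    ext i
    have : (d i : ℂ) ≠ 0 := by exact_mod_cast hd i
    simp only [hXc, vecMul_diagonal, Function.comp_apply, Pi.add_apply, Int.cast_add,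
      Int.cast_mul]
    field_simp
    ring
  have hsum : 2 * ∑ i, (c i : ℂ) * (M' *ᵥ t) i / d i
      = ∑ i, c i * ((2 * (M' *ᵥ t) i : ℤ) : ℂ) / d i := by
    rw [mul_sum]
    exact sum_congr rfl fun i _ => by push_cast; ring
  rw [gaussTerm_eq, hU, gaussPhase, map_intCast_mul, map_intCast_mul,
    quadForm_conj hX (by rw [hXc, diagonal_transpose]) hM'c, ← gaussPhase,
    gaussPhase_add_vecMul hN hsym, dotProduct_add, intCast_vecMul_dotProduct_div hd hM',
    ← intCast_dotProduct, ← expTwoPiI_add, ← hsum]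
  refine (congrArg expTwoPiI ?_).trans
    (expTwoPiI_add_intCast _ (2 * (c ᵥ* M ⬝ᵥ r) + c ᵥ* M ⬝ᵥ c ᵥ* N))
  push_cast
  ring

theorem sum_gaussTerm_diagonal_conj (hd : ∀ i, 0 < d i) (hN : N.det ≠ 0)
    (hsym : M * Nᵀ = N * Mᵀ) (hM' : M' * diagonal d = diagonal d * M)
    {R R' : Finset (Fin n → ℤ)} (hR : IsRepSet N R)
    (hR' : IsRepSet (diagonal d * N * diagonal d) R') :
    ∑ U ∈ R', gaussTerm M' (diagonal d * N * diagonal d) U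
      = ∑ t ∈ Fintype.piFinset (fun i => Ico 0 (d i)),
          (∏ i, if d i ∣ 2 * (M' *ᵥ t) i then (d i : ℂ) else 0)
            * ∑ r ∈ R, expTwoPiI (gaussPhase M N ((fun i => (t i : ℂ) / d i) + Int.cast ∘ r)) := by
  have hd0 : ∀ i, d i ≠ 0 := fun i => (hd i).ne'
  have hX : (diagonal d).det ≠ 0 := det_diagonal_ne_zero hd0
  have hbox := isRepSet_diagonal hd
  have hperiodic := gaussTerm_add_vecMul (C := M')
    (by rw [det_mul, det_mul]; exact mul_ne_zero (mul_ne_zero hX hN) hX)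
    (mul_transpose_eq_of_conj (diagonal_transpose d) hsym hM')
  rw [(hbox.image_add_vecMul hR hN).sum_mul hbox hX hR' hperiodic,
    sum_image (hR.injOn_add_vecMul hN), sum_product]
  simp_rw [gaussTerm_diagonal_conj hd0 hN hsym hM', ← sum_piFinset_expTwoPiI hd, sum_mul_sum]
  rw [← sum_congr rfl fun c _ => sum_comm, sum_comm]
  exact sum_congr rfl fun _ _ => sum_congr rfl fun _ _ => sum_congr rfl fun _ _ => mul_comm _ _

end DiagonalConj

section BlockRank

variable {ι κ K : Type*} [Fintype ι] [Field K]

theorem Matrix.vecMul_injective_of_rank_eq_card [Fintype κ] {A : Matrix ι κ K}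
    (h : A.rank = Fintype.card ι) : Function.Injective A.vecMul :=
  vecMul_injective_iff.mpr <| linearIndependent_iff_card_eq_finrank_span.mpr <| by
    rw [Set.finrank, ← rank_eq_finrank_span_row, h]

theorem Fintype.sum_subtype_eq_sum {M : Type*} [AddCommMonoid M] {P : ι → Prop}
    [DecidablePred P] {f : ι → M} (hf : ∀ i, ¬P i → f i = 0) :
    ∑ i : {i // P i}, f i = ∑ i, f i := by
  rw [← Fintype.sum_subtype_add_sum_subtype P f,
    Fintype.sum_eq_zero (fun i : {i // ¬P i} => f i) fun i => hf i i.2, add_zero]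

theorem Matrix.eq_zero_of_mulVec_eq_zero_on [DecidableEq ι] [Fintype κ] {P : ι → Prop}
    [DecidablePred P] {A : Matrix ι ι K} {D : Matrix ι κ K}
    (hAD : Function.Injective (fromCols A D).vecMul)
    (hA : ∀ i j, P i → ¬P j → A i j = 0) (hD : ∀ i j, P i → D i j = 0)
    {t : ι → K} (ht : ∀ j, ¬P j → t j = 0) (hAt : ∀ i, P i → (A *ᵥ t) i = 0) : t = 0 := by
  set A₁ : Matrix {i // P i} {i // P i} K := A.submatrix (↑) (↑)
  -- A left null vector of `A₁`, extended by zero, would be a left null vector of `(A D)`.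
  have hA₁ : A₁.det ≠ 0 := by
    intro h0
    obtain ⟨y, hy0, hy⟩ := exists_vecMul_eq_zero_iff.mpr h0
    set x : ι → K := fun i => if h : P i then y ⟨i, h⟩ else 0
    have hxy : ∀ f : ι → K, x ⬝ᵥ f = y ⬝ᵥ fun i => f i := fun f => by
      rw [dotProduct, dotProduct,
        ← Fintype.sum_subtype_eq_sum (P := P) fun i hi => by simp only [x, dif_neg hi, zero_mul]]
      exact sum_congr rfl fun i _ => by simp [x, i.2]
    have hx : x ᵥ* fromCols A D = 0 ᵥ* fromCols A D := by
      rw [zero_vecMul, vecMul_fromCols]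
      ext (j | j)
      · change x ⬝ᵥ (fun i => A i j) = 0
        rw [hxy]
        by_cases hj : P j
        · exact congrFun hy ⟨j, hj⟩
        · exact sum_eq_zero fun i _ => by simp [hA _ j i.2 hj]
      · change x ⬝ᵥ (fun i => D i j) = 0
        rw [hxy]
        exact sum_eq_zero fun i _ => by simp [hD _ j i.2]
    exact hy0 (funext fun i => by simpa [x, i.2] using congrFun (hAD hx) i)
  have ht₁ : A₁ *ᵥ (fun i => t i) = 0 := funext fun i => by
    rw [Pi.zero_apply, ← hAt i i.2]
    exact Fintype.sum_subtype_eq_sum (f := fun j => A i j * t j) fun j hj => by simp [ht j hj]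
  funext j
  by_cases hj : P j
  · exact congrFun (eq_zero_of_mulVec_eq_zero hA₁ ht₁) ⟨j, hj⟩
  · exact ht j hj

end BlockRank

section Xs

variable {q s n : ℕ}

def xsDiag (q s n : ℕ) : Fin n → ℤ := fun i => if (i : ℕ) < s then (q : ℤ) else 1

theorem Xs_eq_diagonal : Xs q s n = diagonal (xsDiag q s n) := rfl

theorem xsDiag_pos (hq : 0 < q) (i : Fin n) : 0 < xsDiag q s n i := by
  unfold xsDiag
  split_ifs <;> omega

theorem prod_xsDiag (hs : s ≤ n) : ∏ i, (xsDiag q s n i : ℂ) = (q : ℂ) ^ s := by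
  simp [xsDiag, apply_ite, prod_ite, Fin.card_filter_val_lt, min_eq_right hs]

theorem eq_zero_of_dvd_mulVec_Xs (hq : q.Prime) {M N M' : Matrix (Fin n) (Fin n) ℤ}
    (hM' : M' * Xs q s n = Xs q s n * M)
    (hrank : (fromCols (M'.map (Int.cast : ℤ → ZMod q))
      ((Xs q s n * N * Xs q s n).map (Int.cast : ℤ → ZMod q))).rank = n)
    {t : Fin n → ℤ} (ht : t ∈ Fintype.piFinset fun i => Ico 0 (xsDiag q s n i))
    (hdvd : ∀ i : Fin n, (i : ℕ) < s → (q : ℤ) ∣ (M' *ᵥ t) i) : t = 0 := by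
  have := Fact.mk hq
  simp only [Fintype.mem_piFinset, mem_Ico] at ht
  have hcast : (Int.cast ∘ t : Fin n → ZMod q) = 0 := by
    refine eq_zero_of_mulVec_eq_zero_on (P := fun i : Fin n => (i : ℕ) < s)
      (vecMul_injective_of_rank_eq_card (by rw [hrank, Fintype.card_fin])) ?_ ?_ ?_ ?_
    · intro i j hi hj
      have h := congrFun (congrFun hM' i) j
      simp only [Xs_eq_diagonal, mul_diagonal, diagonal_mul, xsDiag, hi, hj, if_true,
        if_false, mul_one] at h
      simp [h]
    · intro i j hi
      simp [Xs_eq_diagonal, mul_diagonal, diagonal_mul, xsDiag, hi]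
    · intro j hj
      have := ht j
      simp only [xsDiag, hj, if_false] at this
      simp [show t j = 0 by omega]
    · intro i hi
      rw [← intCast_comp_mulVec, Function.comp_apply]
      exact (ZMod.intCast_zmod_eq_zero_iff_dvd _ _).mpr (hdvd i hi)
  funext j
  have hle : xsDiag q s n j ≤ q := by unfold xsDiag; split_ifs <;> simp [hq.one_le]
  exact Int.eq_zero_of_dvd_of_nonneg_of_lt (ht j).1 ((ht j).2.trans_le hle)
    ((ZMod.intCast_zmod_eq_zero_iff_dvd _ _).mp (congrFun hcast j))

theorem prod_ite_dvd_eq_zero_of_ne_zero (hq : q.Prime) (hq2 : q ≠ 2)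
    {M N M' : Matrix (Fin n) (Fin n) ℤ} (hM' : M' * Xs q s n = Xs q s n * M)
    (hrank : (fromCols (M'.map (Int.cast : ℤ → ZMod q))
      ((Xs q s n * N * Xs q s n).map (Int.cast : ℤ → ZMod q))).rank = n)
    {t : Fin n → ℤ} (ht : t ∈ Fintype.piFinset fun i => Ico 0 (xsDiag q s n i)) (ht0 : t ≠ 0) :
    ∏ i, (if xsDiag q s n i ∣ 2 * (M' *ᵥ t) i then (xsDiag q s n i : ℂ) else 0) = 0 := by
  by_contra h
  refine ht0 (eq_zero_of_dvd_mulVec_Xs hq hM' hrank ht fun i hi => ?_)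
  have hi' := (prod_ne_zero_iff.mp h) i (mem_univ i)
  simp only [xsDiag, hi, if_true, ne_eq, ite_eq_right_iff, Classical.not_imp] at hi'
  refine (Int.Prime.dvd_mul' hq hi'.1).resolve_left fun h2 => hq2 ?_
  exact (Nat.prime_dvd_prime_iff_eq hq Nat.prime_two).mp (by exact_mod_cast h2)

end Xs

/-- If `(M, N)` and `(X_s M X_s⁻¹, X_s N X_s)` are integral coprime symmetric pairs,
then `𝒢_{X_s M X_s⁻¹}(X_s N X_s) = q^s 𝒢_M(N)`. -/
theorem gauss_sum_Xs_conj (q : ℕ) (hq : q.Prime) (hq2 : q ≠ 2) (n s : ℕ) (hs : s ≤ n)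
    (M N M' : Matrix (Fin n) (Fin n) ℤ)
    (hdet : N.det ≠ 0)
    (hMN : IsCoprimeSymmetricPair M N)
    (hM' : M'.map ((↑) : ℤ → ℚ) =
      (Xs q s n).map ((↑) : ℤ → ℚ) * M.map ((↑) : ℤ → ℚ) *
        ((Xs q s n).map ((↑) : ℤ → ℚ))⁻¹)
    (hpair' : IsCoprimeSymmetricPair M' (Xs q s n * N * Xs q s n))
    (R R' : Finset (Fin n → ℤ))
    (hR : IsRepSet N R) (hR' : IsRepSet (Xs q s n * N * Xs q s n) R') :
    ∑ U ∈ R', gaussTerm M' (Xs q s n * N * Xs q s n) U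
      = (q : ℂ) ^ s * ∑ U ∈ R, gaussTerm M N U := by
  have hd := xsDiag_pos (s := s) (n := n) hq.pos
  have hMX : M' * Xs q s n = Xs q s n * M :=
    mul_eq_mul_of_map_intCast_eq_conj (det_diagonal_ne_zero fun i => (hd i).ne') hM'
  have hzero : (0 : Fin n → ℤ) ∈ Fintype.piFinset fun i => Ico 0 (xsDiag q s n i) := by
    simpa using hd
  rw [Xs_eq_diagonal] at hR' ⊢
  rw [sum_gaussTerm_diagonal_conj hd hdet hMN.1 hMX hR hR', sum_eq_single_of_mem 0 hzero
    fun t ht ht0 => by rw [prod_ite_dvd_eq_zero_of_ne_zero hq hq2 hMX (hpair'.2 q hq) ht ht0,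
      zero_mul]]
  have hphase : ∀ r : Fin n → ℤ,
      (fun i => ((0 : ℤ) : ℂ) / xsDiag q s n i) + Int.cast ∘ r = Int.cast ∘ r :=
    fun r => by ext; simp
  simp only [mulVec_zero, Pi.zero_apply, mul_zero, dvd_zero, if_true, prod_xsDiag hs, hphase,
    gaussTerm_eq]
end

section
/- For (C, D) a coprime symmetric pair of n×n integer matrices with det D ≠ 0 and any E ∈ GL_n(ℤ), the generalized Gauss sums satisfy 𝒢_{EC}(ED) = 𝒢_C(D) = 𝒢_{CE}(D ᵗE⁻¹). -/
open Matrix Finset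

namespace GaussAux

variable {n : ℕ}

/-- Complexification of an integer matrix. -/
noncomputable def cm (A : Matrix (Fin n) (Fin n) ℤ) : Matrix (Fin n) (Fin n) ℂ :=
  A.map (Int.cast : ℤ → ℂ)

/-- Complexification of an integer vector. -/
noncomputable def cvec (v : Fin n → ℤ) : Fin n → ℂ := fun i => (v i : ℂ)

lemma cm_mul (A B : Matrix (Fin n) (Fin n) ℤ) : cm (A * B) = cm A * cm B := by
  ext i j; simp [cm, Matrix.mul_apply]

lemma cm_transpose (A : Matrix (Fin n) (Fin n) ℤ) : cm Aᵀ = (cm A)ᵀ := by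
  ext i j; simp [cm]

lemma cm_one : cm (1 : Matrix (Fin n) (Fin n) ℤ) = 1 := by
  ext i j; simp [cm, Matrix.one_apply, apply_ite]

lemma cm_det (A : Matrix (Fin n) (Fin n) ℤ) : (cm A).det = (A.det : ℂ) :=
  (RingHom.map_det (Int.castRingHom ℂ) A).symm

lemma cm_det_isUnit {A : Matrix (Fin n) (Fin n) ℤ} (h : A.det ≠ 0) : IsUnit (cm A).det := by
  rw [cm_det]
  exact isUnit_iff_ne_zero.2 (Int.cast_ne_zero.2 h)

lemma cm_det_isUnit' {A : Matrix (Fin n) (Fin n) ℤ} (h : IsUnit A.det) : IsUnit (cm A).det :=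
  cm_det_isUnit h.ne_zero

lemma cm_inv {A : Matrix (Fin n) (Fin n) ℤ} (h : IsUnit A.det) : cm (A⁻¹) = (cm A)⁻¹ := by
  have h1 : cm A * cm (A⁻¹) = 1 := by
    rw [← cm_mul, Matrix.mul_nonsing_inv A h, cm_one]
  exact (Matrix.inv_eq_right_inv h1).symm

lemma cvec_add (v w : Fin n → ℤ) : cvec (v + w) = cvec v + cvec w := by
  funext i; simp [cvec]

lemma cvec_vecMul (v : Fin n → ℤ) (A : Matrix (Fin n) (Fin n) ℤ) :
    cvec (v ᵥ* A) = cvec v ᵥ* cm A := by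
  funext i; simp [cvec, cm, Matrix.vecMul, dotProduct]

lemma cvec_dot (v w : Fin n → ℤ) : cvec v ⬝ᵥ cvec w = ((v ⬝ᵥ w : ℤ) : ℂ) := by
  simp [cvec, dotProduct]

lemma trace_vecMulVec_mul (a b : Fin n → ℂ) (M : Matrix (Fin n) (Fin n) ℂ) :
    (vecMulVec a b * M).trace = a ⬝ᵥ (b ᵥ* M) := by
  simp [Matrix.trace, Matrix.diag, Matrix.mul_apply, Matrix.vecMulVec_apply, dotProduct,
    Matrix.vecMul, Finset.mul_sum, mul_assoc]

lemma trace_two_mul (X : Matrix (Fin n) (Fin n) ℂ) : (2 * X).trace = 2 * X.trace := by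
  rw [two_mul, Matrix.trace_add, ← two_mul]

lemma dot_vecMul (x y : Fin n → ℂ) (N : Matrix (Fin n) (Fin n) ℂ) :
    x ⬝ᵥ (y ᵥ* N) = (x ᵥ* Nᵀ) ⬝ᵥ y := by
  rw [← Matrix.mulVec_transpose, Matrix.dotProduct_mulVec]

lemma gaussTerm_eq (C D : Matrix (Fin n) (Fin n) ℤ) (U : Fin n → ℤ) :
    gaussTerm C D U =
      Complex.exp (Real.pi * Complex.I *
        (2 * (cvec U ⬝ᵥ (cvec U ᵥ* ((cm D)⁻¹ * cm C))))) := by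
  unfold gaussTerm
  rw [trace_two_mul, trace_vecMulVec_mul]
  rfl

lemma exp_pi_I_two_add_int (x : ℂ) (k : ℤ) :
    Complex.exp (Real.pi * Complex.I * (2 * (x + k))) =
      Complex.exp (Real.pi * Complex.I * (2 * x)) := by
  rw [show (Real.pi * Complex.I * (2 * (x + k)) : ℂ) =
      Real.pi * Complex.I * (2 * x) + k * (2 * Real.pi * Complex.I) by ring,
    Complex.exp_add, Complex.exp_int_mul_two_pi_mul_I, mul_one]

/-- Periodicity of the Gauss sum summand. -/
lemma gaussTerm_periodic (C D : Matrix (Fin n) (Fin n) ℤ) (hdet : D.det ≠ 0)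
    (hsym : C * Dᵀ = D * Cᵀ) (u w : Fin n → ℤ) :
    gaussTerm C D (u + w ᵥ* D) = gaussTerm C D u := by
  have hD : IsUnit (cm D).det := cm_det_isUnit hdet
  have hDT : IsUnit ((cm D)ᵀ).det := by rwa [Matrix.det_transpose]
  set M : Matrix (Fin n) (Fin n) ℂ := (cm D)⁻¹ * cm C with hM
  have hDM : cm D * M = cm C := Matrix.mul_nonsing_inv_cancel_left _ _ hD
  have hMsym : Mᵀ = M := by
    have h1 : cm C * (cm D)ᵀ = cm D * (cm C)ᵀ := by
      rw [← cm_transpose, ← cm_transpose, ← cm_mul, ← cm_mul, hsym]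
    have h2 : (cm D)⁻¹ * (cm C * (cm D)ᵀ) * ((cm D)ᵀ)⁻¹ =
        (cm D)⁻¹ * (cm D * (cm C)ᵀ) * ((cm D)ᵀ)⁻¹ := by rw [h1]
    calc Mᵀ = (cm C)ᵀ * ((cm D)ᵀ)⁻¹ := by
            rw [hM, Matrix.transpose_mul, Matrix.transpose_nonsing_inv]
      _ = (cm D)⁻¹ * (cm D * (cm C)ᵀ) * ((cm D)ᵀ)⁻¹ := by
            rw [← Matrix.mul_assoc, Matrix.nonsing_inv_mul _ hD, Matrix.one_mul]
      _ = (cm D)⁻¹ * (cm C * (cm D)ᵀ) * ((cm D)ᵀ)⁻¹ := by rw [h1]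
      _ = (cm D)⁻¹ * cm C * ((cm D)ᵀ * ((cm D)ᵀ)⁻¹) := by
            rw [Matrix.mul_assoc, Matrix.mul_assoc, Matrix.mul_assoc]
      _ = M := by rw [Matrix.mul_nonsing_inv _ hDT, Matrix.mul_one, hM]
  rw [gaussTerm_eq, gaussTerm_eq, cvec_add, cvec_vecMul]
  set a : Fin n → ℂ := cvec u
  set b : Fin n → ℂ := cvec w
  have hbC : (b ᵥ* cm D) ᵥ* M = b ᵥ* cm C := by rw [Matrix.vecMul_vecMul, hDM]
  have hcross : (b ᵥ* cm D) ⬝ᵥ (a ᵥ* M) = a ⬝ᵥ (b ᵥ* cm C) := by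
    rw [dot_vecMul, hMsym, Matrix.vecMul_vecMul, hDM, dotProduct_comm]
  have expand : (a + b ᵥ* cm D) ⬝ᵥ ((a + b ᵥ* cm D) ᵥ* M) =
      a ⬝ᵥ (a ᵥ* M) +
        (((u ⬝ᵥ (w ᵥ* C) + u ⬝ᵥ (w ᵥ* C) + (w ᵥ* D) ⬝ᵥ (w ᵥ* C) : ℤ) : ℂ)) := by
    rw [Matrix.add_vecMul, hbC, dotProduct_add, add_dotProduct, add_dotProduct, hcross]
    have e1 : a ⬝ᵥ (b ᵥ* cm C) = ((u ⬝ᵥ (w ᵥ* C) : ℤ) : ℂ) := by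
      rw [← cvec_vecMul, cvec_dot]
    have e2 : (b ᵥ* cm D) ⬝ᵥ (b ᵥ* cm C) = (((w ᵥ* D) ⬝ᵥ (w ᵥ* C) : ℤ) : ℂ) := by
      rw [← cvec_vecMul, ← cvec_vecMul, cvec_dot]
    rw [e1, e2]
    push_cast
    ring
  rw [expand, exp_pi_I_two_add_int]

/-- Left multiplication by a unimodular matrix does not change the summand. -/
lemma gaussTerm_mul_left (C D E : Matrix (Fin n) (Fin n) ℤ) (hE : IsUnit E.det) :
    gaussTerm (E * C) (E * D) = gaussTerm C D := by
  funext U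
  rw [gaussTerm_eq, gaussTerm_eq]
  rw [cm_mul, cm_mul, Matrix.mul_inv_rev, Matrix.mul_assoc, ← Matrix.mul_assoc (cm E)⁻¹,
    Matrix.nonsing_inv_mul _ (cm_det_isUnit' hE), Matrix.one_mul]

/-- Right multiplication: the summand transforms by the substitution `U ↦ U ᵥ* Eᵀ`. -/
lemma gaussTerm_mul_right (C D E : Matrix (Fin n) (Fin n) ℤ) (hE : IsUnit E.det)
    (U : Fin n → ℤ) :
    gaussTerm (C * E) (D * (E⁻¹)ᵀ) U = gaussTerm C D (U ᵥ* Eᵀ) := by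
  have hEc : IsUnit (cm E).det := cm_det_isUnit' hE
  have hEcT : IsUnit ((cm E)ᵀ).det := by rwa [Matrix.det_transpose]
  rw [gaussTerm_eq, gaussTerm_eq, cvec_vecMul, cm_transpose]
  have hinv : cm ((E⁻¹)ᵀ) = ((cm E)ᵀ)⁻¹ := by
    rw [cm_transpose, cm_inv hE, Matrix.transpose_nonsing_inv]
  have hmat : (cm (D * (E⁻¹)ᵀ))⁻¹ * cm (C * E) =
      (cm E)ᵀ * ((cm D)⁻¹ * cm C) * cm E := by
    rw [cm_mul, cm_mul, hinv, Matrix.mul_inv_rev, Matrix.nonsing_inv_nonsing_inv _ hEcT]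
    rw [Matrix.mul_assoc, Matrix.mul_assoc, Matrix.mul_assoc]
  rw [hmat]
  set a : Fin n → ℂ := cvec U
  set M : Matrix (Fin n) (Fin n) ℂ := (cm D)⁻¹ * cm C
  have : a ᵥ* ((cm E)ᵀ * M * cm E) = ((a ᵥ* (cm E)ᵀ) ᵥ* M) ᵥ* cm E := by
    rw [Matrix.vecMul_vecMul, Matrix.vecMul_vecMul, Matrix.mul_assoc]
  rw [this, dot_vecMul a _ (cm E)]

/-- Summing a `D`-periodic function over a complete set of representatives is
independent of the choice of representatives. -/
lemma sum_congr_repSet (D : Matrix (Fin n) (Fin n) ℤ) (f : (Fin n → ℤ) → ℂ)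
    (hf : ∀ u w, f (u + w ᵥ* D) = f u)
    {R R' : Finset (Fin n → ℤ)} (hR : IsRepSet D R) (hR' : IsRepSet D R') :
    ∑ u ∈ R, f u = ∑ u ∈ R', f u := by
  refine Finset.sum_bij' (fun u _ => (hR' u).choose) (fun u _ => (hR u).choose)
    (fun a _ => ((hR' a).choose_spec.1).1) (fun a _ => ((hR a).choose_spec.1).1)
    ?_ ?_ ?_
  · intro a ha
    obtain ⟨w, hw⟩ := ((hR' a).choose_spec.1).2
    exact ((hR (hR' a).choose).choose_spec.2 a
      ⟨ha, -w, by
        rw [Matrix.neg_vecMul, ← sub_eq_add_neg]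
        exact eq_sub_of_add_eq hw.symm⟩).symm
  · intro a ha
    obtain ⟨w, hw⟩ := ((hR a).choose_spec.1).2
    exact ((hR' (hR a).choose).choose_spec.2 a
      ⟨ha, -w, by
        rw [Matrix.neg_vecMul, ← sub_eq_add_neg]
        exact eq_sub_of_add_eq hw.symm⟩).symm
  · intro a _
    obtain ⟨w, hw⟩ := ((hR' a).choose_spec.1).2
    conv_lhs => rw [hw]
    exact hf _ w

lemma isRepSet_of_mul_left (E D : Matrix (Fin n) (Fin n) ℤ) (hE : IsUnit E.det)
    {R : Finset (Fin n → ℤ)} (h : IsRepSet (E * D) R) : IsRepSet D R := by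
  have h1 : E⁻¹ * E = 1 := Matrix.nonsing_inv_mul E hE
  intro v
  obtain ⟨u, ⟨huR, w, hw⟩, hu⟩ := h v
  refine ⟨u, ⟨huR, w ᵥ* E, by rw [Matrix.vecMul_vecMul]; exact hw⟩, ?_⟩
  rintro y ⟨hyR, w', rfl⟩
  exact hu y ⟨hyR, w' ᵥ* E⁻¹,
    by rw [Matrix.vecMul_vecMul, ← Matrix.mul_assoc, h1, Matrix.one_mul]⟩

lemma isRepSet_image (B F : Matrix (Fin n) (Fin n) ℤ) (hF : IsUnit F.det)
    {R : Finset (Fin n → ℤ)} (h : IsRepSet B R) :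
    IsRepSet (B * F) (R.image (· ᵥ* F)) := by
  have hFF : F * F⁻¹ = 1 := Matrix.mul_nonsing_inv F hF
  have hFF' : F⁻¹ * F = 1 := Matrix.nonsing_inv_mul F hF
  intro v
  obtain ⟨u, ⟨huR, w, hw⟩, hu⟩ := h (v ᵥ* F⁻¹)
  have hv : v = u ᵥ* F + w ᵥ* (B * F) := by
    have h2 := congrArg (fun x => x ᵥ* F) hw
    simp only [Matrix.add_vecMul, Matrix.vecMul_vecMul] at h2
    rwa [hFF', Matrix.vecMul_one] at h2
  refine ⟨u ᵥ* F, ⟨Finset.mem_image_of_mem _ huR, w, hv⟩, ?_⟩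
  rintro y ⟨hy, w', hw'⟩
  obtain ⟨u', hu'R, rfl⟩ := Finset.mem_image.mp hy
  have h3 : v ᵥ* F⁻¹ = u' + w' ᵥ* B := by
    rw [hw']
    rw [Matrix.add_vecMul, Matrix.vecMul_vecMul, Matrix.vecMul_vecMul,
      Matrix.mul_assoc, hFF, Matrix.mul_one, Matrix.vecMul_one]
  rw [hu u' ⟨hu'R, w', h3⟩]

lemma vecMul_injective (F : Matrix (Fin n) (Fin n) ℤ) (hF : IsUnit F.det) :
    Function.Injective (fun v : Fin n → ℤ => v ᵥ* F) := by
  intro a b hab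
  have hFF : F * F⁻¹ = 1 := Matrix.mul_nonsing_inv F hF
  have := congrArg (fun x => x ᵥ* F⁻¹) hab
  simpa [Matrix.vecMul_vecMul, hFF, Matrix.vecMul_one] using this

end GaussAux

open GaussAux

/-- For `(C, D)` a coprime symmetric pair with `det D ≠ 0` and `E ∈ GL_n(ℤ)`:
`𝒢_{EC}(ED) = 𝒢_C(D) = 𝒢_{CE}(D ᵗE⁻¹)`. -/
theorem gauss_sum_GL_invariance (n : ℕ) (C D E : Matrix (Fin n) (Fin n) ℤ)
    (hdet : D.det ≠ 0) (hE : IsUnit E.det)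
    (hCD : IsCoprimeSymmetricPair C D)
    (R R₁ R₂ : Finset (Fin n → ℤ))
    (hR : IsRepSet D R) (hR₁ : IsRepSet (E * D) R₁)
    (hR₂ : IsRepSet (D * (E⁻¹)ᵀ) R₂) :
    (∑ U ∈ R₁, gaussTerm (E * C) (E * D) U = ∑ U ∈ R, gaussTerm C D U) ∧
    (∑ U ∈ R₂, gaussTerm (C * E) (D * (E⁻¹)ᵀ) U = ∑ U ∈ R, gaussTerm C D U) := by
  have hper : ∀ u w, gaussTerm C D (u + w ᵥ* D) = gaussTerm C D u :=
    fun u w => gaussTerm_periodic C D hdet hCD.1 u w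
  constructor
  · rw [gaussTerm_mul_left C D E hE]
    exact sum_congr_repSet D _ hper (isRepSet_of_mul_left E D hE hR₁) hR
  · have hET : IsUnit (Eᵀ).det := by rwa [Matrix.det_transpose]
    have himg : IsRepSet D (R₂.image (· ᵥ* Eᵀ)) := by
      have h0 := isRepSet_image (D * (E⁻¹)ᵀ) Eᵀ hET hR₂
      have h1 : D * (E⁻¹)ᵀ * Eᵀ = D := by
        rw [Matrix.mul_assoc, ← Matrix.transpose_mul, Matrix.mul_nonsing_inv E hE,
          Matrix.transpose_one, Matrix.mul_one]
      rwa [h1] at h0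
    calc ∑ U ∈ R₂, gaussTerm (C * E) (D * (E⁻¹)ᵀ) U
        = ∑ U ∈ R₂, gaussTerm C D (U ᵥ* Eᵀ) :=
          Finset.sum_congr rfl (fun U _ => gaussTerm_mul_right C D E hE U)
      _ = ∑ V ∈ R₂.image (· ᵥ* Eᵀ), gaussTerm C D V :=
          (Finset.sum_image (fun x _ y _ hxy => vecMul_injective Eᵀ hET hxy)).symm
      _ = ∑ U ∈ R, gaussTerm C D U := sum_congr_repSet D _ hper himg hR
end

section
/- For a prime q, integers 0 ≤ ℓ ≤ j and 0 ≤ r + s ≤ ℓ ≤ j, the Gaussian binomial coefficients satisfy β_q(n−ℓ, j−ℓ)·β_q(n, ℓ)·β_q(ℓ, r)·β_q(ℓ−r, s) = β_q(n, j)·β_q(j, r)·β_q(j−r, s)·β_q(j−r−s, ℓ−r−s), for all n ≥ j. -/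
open Finset

/-- The Gaussian binomial coefficient
`β_q(b,c) = Π_{i=0}^{c-1}(q^{b-i} - 1) / Π_{i=0}^{c-1}(q^{c-i} - 1)`. -/
def gaussBinom (q b c : ℕ) : ℚ :=
  (∏ i ∈ Finset.range c, ((q : ℚ) ^ (b - i) - 1)) /
    (∏ i ∈ Finset.range c, ((q : ℚ) ^ (c - i) - 1))

/-! Writing `β_q(b,c) = [b]! / ([c]! [b-c]!)` with `[m]! = ∏_{i=1}^m (q^i - 1)`, every product
`β_q(b,c) β_q(c,d)` of consecutive coefficients equals `[b]! / ([b-c]! [c-d]! [d]!)`, hence also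
`β_q(b,d) β_q(b-d,c-d)`. Three such exchanges turn one side of the identity into the other. -/

def gaussFactorial (q m : ℕ) : ℚ := ∏ i ∈ range m, ((q : ℚ) ^ (i + 1) - 1)

lemma gaussFactorial_ne_zero {q : ℕ} (hq : q ≠ 1) (m : ℕ) : gaussFactorial q m ≠ 0 := by
  refine prod_ne_zero_iff.2 fun i _ => sub_ne_zero.2 ?_
  exact_mod_cast fun h => hq (Nat.pow_eq_one.1 h |>.resolve_right i.succ_ne_zero)

lemma gaussFactorial_sub_succ (q : ℕ) {b c : ℕ} (h : c < b) :
    gaussFactorial q (b - c) = gaussFactorial q (b - (c + 1)) * ((q : ℚ) ^ (b - c) - 1) := by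
  obtain ⟨k, hk⟩ : ∃ k, b - c = k + 1 := ⟨b - (c + 1), by omega⟩
  rw [hk, show b - (c + 1) = k by omega]
  exact prod_range_succ _ k

lemma prod_range_pow_sub_one_mul_gaussFactorial (q : ℕ) {b c : ℕ} (h : c ≤ b) :
    (∏ i ∈ range c, ((q : ℚ) ^ (b - i) - 1)) * gaussFactorial q (b - c) = gaussFactorial q b := by
  induction c with
  | zero => simp
  | succ c ih =>
    rw [prod_range_succ, ← ih (by omega), gaussFactorial_sub_succ q (by omega : c < b)]
    ring

lemma gaussBinom_eq_div {q : ℕ} (hq : q ≠ 1) {b c : ℕ} (h : c ≤ b) :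
    gaussBinom q b c = gaussFactorial q b / (gaussFactorial q c * gaussFactorial q (b - c)) := by
  have hden := prod_range_pow_sub_one_mul_gaussFactorial q (le_refl c)
  rw [Nat.sub_self, show gaussFactorial q 0 = 1 from prod_range_zero _, mul_one] at hden
  rw [gaussBinom, hden, ← prod_range_pow_sub_one_mul_gaussFactorial q h]
  have := gaussFactorial_ne_zero hq (b - c)
  field_simp

lemma gaussBinom_mul_gaussBinom {q : ℕ} (hq : q ≠ 1) {b c d : ℕ} (hdc : d ≤ c) (hcb : c ≤ b) :
    gaussBinom q b c * gaussBinom q c d = gaussBinom q b d * gaussBinom q (b - d) (c - d) := by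
  rw [gaussBinom_eq_div hq hcb, gaussBinom_eq_div hq hdc, gaussBinom_eq_div hq (hdc.trans hcb),
    gaussBinom_eq_div hq (by omega), show b - d - (c - d) = b - c by omega]
  have := gaussFactorial_ne_zero hq b
  have := gaussFactorial_ne_zero hq c
  have := gaussFactorial_ne_zero hq d
  have := gaussFactorial_ne_zero hq (b - c)
  have := gaussFactorial_ne_zero hq (c - d)
  have := gaussFactorial_ne_zero hq (b - d)
  field_simp

/-- `β_q(n-ℓ, j-ℓ) β_q(n, ℓ) β_q(ℓ, r) β_q(ℓ-r, s)
  = β_q(n, j) β_q(j, r) β_q(j-r, s) β_q(j-r-s, ℓ-r-s)` for `r + s ≤ ℓ ≤ j ≤ n`. -/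
theorem gaussBinom_product_identity (q : ℕ) (hq : q.Prime) (n j ℓ r s : ℕ)
    (hrs : r + s ≤ ℓ) (hℓj : ℓ ≤ j) (hjn : j ≤ n) :
    gaussBinom q (n - ℓ) (j - ℓ) * gaussBinom q n ℓ * gaussBinom q ℓ r *
        gaussBinom q (ℓ - r) s
      = gaussBinom q n j * gaussBinom q j r * gaussBinom q (j - r) s *
        gaussBinom q (j - r - s) (ℓ - r - s) := by
  have hq1 := hq.ne_one
  calc _ = gaussBinom q n j * gaussBinom q j ℓ * gaussBinom q ℓ r * gaussBinom q (ℓ - r) s := by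
        rw [gaussBinom_mul_gaussBinom hq1 hℓj hjn, mul_comm (gaussBinom q n ℓ)]
    _ = gaussBinom q n j * gaussBinom q j r * (gaussBinom q (j - r) (ℓ - r) *
          gaussBinom q (ℓ - r) s) := by
        rw [mul_assoc _ (gaussBinom q j ℓ), gaussBinom_mul_gaussBinom hq1 (d := r) (by omega) hℓj]
        ring
    _ = _ := by
        rw [gaussBinom_mul_gaussBinom hq1 (b := j - r) (by omega) (by omega)]
        ring
end
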